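/- arXiv:1203.2214 — 3 statements merged into one kernel-verified Lean document; each statement's English description precedes it below -/
import Mathlib

section
/- Every arithmetic subgroup Γ of GL_n(ℤ) contains a finite-index subgroup that is neat, i.e., such that for every element of the subgroup the multiplicative subgroup of ℂ* generated by its eigenvalues is torsion-free. -/
/-!
Take `Γ ∩ ker (GL_n(ℤ) → GL_n(ℤ/3))`. If `g = 1 + 3B` with `B` an integer matrix, every
eigenvalue of `g` is `1 + 3ν` with `ν` an eigenvalue of `B`, hence an algebraic integer, and its
inverse is an eigenvalue of `g⁻¹`, hence integral too. Such units form a subgroup of `ℂˣ`, which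
therefore contains the eigenvalue subgroup of `g`. A root of unity `ζ = 1 + 3ν` in it is `1`:
a nonzero algebraic integer `ν` has a conjugate of absolute value at least `1`, whereas every
conjugate of `ν` is `(σζ - 1)/3`, of absolute value at most `2/3`.
-/

open Matrix

/-- The multiplicative subgroup of `ℂˣ` generated by the complex eigenvalues of an
integer matrix `g` (an element of `GL n ℤ`), i.e. by the units whose underlying complex
number lies in the spectrum of `g` viewed as a complex matrix. -/
def eigenvalueSubgroup (n : ℕ) (g : GL (Fin n) ℤ) : Subgroup ℂˣ :=
  Subgroup.closure {u : ℂˣ | (u : ℂ) ∈ spectrum ℂ ((g : Matrix (Fin n) (Fin n) ℤ).map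
    (Int.cast : ℤ → ℂ))}

/-- The (December 2024) Mathlib definition: a monoid is torsion-free if all non-identity
elements have infinite order. -/
def Monoid.IsTorsionFree (G : Type*) [Monoid G] : Prop :=
  ∀ g : G, g ≠ 1 → ¬IsOfFinOrder g

open NumberField IntermediateField

theorem Subgroup.isTorsionFree_of_le {G : Type*} [Group G] {H K : Subgroup G} (hHK : H ≤ K)
    (hK : ∀ g ∈ K, IsOfFinOrder g → g = 1) : Monoid.IsTorsionFree H :=
  fun g hg hfin => hg (Subtype.ext (hK g (hHK g.2) (H.subtype.isOfFinOrder hfin)))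

theorem spectrum.exists_eq_one_add_mul_of_mem_one_add_smul {𝕜 A : Type*} [Field 𝕜] [Ring A]
    [Algebra 𝕜 A] {a : A} {c : 𝕜} (hc : c ≠ 0) {μ : 𝕜} (hμ : μ ∈ spectrum 𝕜 (1 + c • a)) :
    ∃ ν ∈ spectrum 𝕜 a, μ = 1 + c * ν := by
  rw [← map_one (algebraMap 𝕜 A), ← spectrum.singleton_add_eq, ← Units.val_mk0 hc,
    ← Units.smul_def, spectrum.unit_smul_eq_smul] at hμ
  obtain ⟨_, rfl, _, ⟨ν, hν, rfl⟩, rfl⟩ := hμ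
  exact ⟨ν, hν, rfl⟩

theorem Matrix.isIntegral_of_mem_spectrum_map_intCast {ι K : Type*} [Fintype ι] [DecidableEq ι]
    [Field K] {A : Matrix ι ι ℤ} {μ : K} (hμ : μ ∈ spectrum K (A.map (Int.cast : ℤ → K))) :
    IsIntegral ℤ μ := by
  refine ⟨A.charpoly, A.charpoly_monic, ?_⟩
  have := Matrix.mem_spectrum_iff_isRoot_charpoly.mp hμ
  rwa [show (Int.cast : ℤ → K) = Int.castRingHom K from rfl, Matrix.charpoly_map,
    Polynomial.IsRoot, Polynomial.eval_map] at this

theorem NumberField.eq_one_of_pow_eq_one_of_eq_one_add_mul {K : Type*} [Field K] [NumberField K]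
    {p : ℕ} (hp : 3 ≤ p) {ζ : K} {α : 𝓞 K} (hζα : ζ = 1 + p * α)
    {m : ℕ} (hm : m ≠ 0) (hζ : ζ ^ m = 1) : ζ = 1 := by
  by_contra hζ1
  have hα : α ≠ 0 := by
    rintro rfl
    exact hζ1 (by simpa using hζα)
  obtain ⟨σ, hσ⟩ := exists_conjugate_one_le_norm hα
  have hσζ : ‖σ ζ‖ = 1 := Complex.norm_eq_one_of_pow_eq_one (by rw [← map_pow, hζ, map_one]) hm
  have hle : (p : ℝ) * ‖σ α‖ ≤ 2 := by
    calc (p : ℝ) * ‖σ α‖ = ‖σ ζ - 1‖ := by simp [hζα]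
      _ ≤ ‖σ ζ‖ + ‖(1 : ℂ)‖ := norm_sub_le _ _
      _ = 2 := by rw [hσζ, norm_one]; norm_num
  have hp' : (3 : ℝ) ≤ p := by exact_mod_cast hp
  nlinarith

theorem Complex.eq_one_of_pow_eq_one_of_eq_one_add_mul {p : ℕ} (hp : 3 ≤ p) {ζ α : ℂ}
    (hα : IsIntegral ℤ α) (hζα : ζ = 1 + p * α) {m : ℕ} (hm : m ≠ 0) (hζ : ζ ^ m = 1) :
    ζ = 1 := by
  have : FiniteDimensional ℚ ℚ⟮α⟯ := adjoin.finiteDimensional hα.tower_top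
  have : NumberField ℚ⟮α⟯ := {}
  let a : 𝓞 ℚ⟮α⟯ := ⟨AdjoinSimple.gen ℚ α,
    (isIntegral_algebraMap_iff (algebraMap ℚ⟮α⟯ ℂ).injective).mp hα⟩
  let z : ℚ⟮α⟯ := 1 + p * a
  have hz : (z : ℂ) = ζ := by rw [hζα]; rfl
  have hzm : z ^ m = 1 := Subtype.val_injective (by simpa [hz] using hζ)
  have hz1 : z = 1 := NumberField.eq_one_of_pow_eq_one_of_eq_one_add_mul hp rfl hm hzm
  rw [← hz, hz1]
  rfl

/-- For `R = ℂ`: the algebraic units congruent to `1` modulo `p`. -/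
def congruenceUnits (R : Type*) [CommRing R] (p : ℕ) : Subgroup Rˣ where
  carrier := {u | IsIntegral ℤ (↑u⁻¹ : R) ∧ ∃ α : R, IsIntegral ℤ α ∧ (u : R) = 1 + p * α}
  one_mem' := ⟨by simpa using isIntegral_one, 0, isIntegral_zero, by simp⟩
  mul_mem' := by
    rintro a b ⟨hai, α, hα, ha⟩ ⟨hbi, β, hβ, hb⟩
    refine ⟨by simpa [mul_comm] using hai.mul hbi, α + β + p * (α * β), ?_, ?_⟩
    · exact (hα.add hβ).add ((isIntegral_natCast p).mul (hα.mul hβ))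
    · simp only [Units.val_mul, ha, hb]
      ring
  inv_mem' := by
    rintro u ⟨hui, α, hα, hu⟩
    refine ⟨?_, -(↑u⁻¹ * α), hui.mul hα |>.neg, ?_⟩
    · simpa [hu] using isIntegral_one.add ((isIntegral_natCast p).mul hα)
    · linear_combination u.inv_mul - (↑u⁻¹ : R) * hu

theorem congruenceUnits.eq_one_of_isOfFinOrder {p : ℕ} (hp : 3 ≤ p) {u : ℂˣ}
    (hu : u ∈ congruenceUnits ℂ p) (hfin : IsOfFinOrder u) : u = 1 := by
  obtain ⟨-, α, hα, hu⟩ := hu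
  obtain ⟨m, hm, hum⟩ := isOfFinOrder_iff_pow_eq_one.mp hfin
  exact Units.ext (Complex.eq_one_of_pow_eq_one_of_eq_one_add_mul hp hα hu hm.ne'
    (by rw [← Units.val_pow_eq_pow_val, hum, Units.val_one]))

section PrincipalCongruence

variable (ι : Type*) [Fintype ι] [DecidableEq ι]

def principalCongruenceSubgroup (p : ℕ) : Subgroup (GL ι ℤ) :=
  (Units.map (Int.castRingHom (ZMod p)).mapMatrix.toMonoidHom).ker

instance (p : ℕ) [NeZero p] : (principalCongruenceSubgroup ι p).FiniteIndex :=
  Subgroup.finiteIndex_ker _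

variable {ι}

theorem exists_eq_one_add_smul_of_mem_principalCongruenceSubgroup {p : ℕ} {g : GL ι ℤ}
    (hg : g ∈ principalCongruenceSubgroup ι p) :
    ∃ B : Matrix ι ι ℤ, (g : Matrix ι ι ℤ) = 1 + (p : ℤ) • B := by
  have hg' : ((g : Matrix ι ι ℤ) - 1).map (Int.cast : ℤ → ZMod p) = 0 := by
    rw [Matrix.map_sub _ Int.cast_sub, Matrix.map_one _ Int.cast_zero Int.cast_one, sub_eq_zero]
    exact congrArg Units.val hg
  have hdvd (i j : ι) : (p : ℤ) ∣ ((g : Matrix ι ι ℤ) - 1) i j :=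
    (ZMod.intCast_zmod_eq_zero_iff_dvd _ p).mp (congr_fun₂ hg' i j)
  refine ⟨((g : Matrix ι ι ℤ) - 1).map (· / (p : ℤ)), ?_⟩
  ext i j
  rw [Matrix.add_apply, Matrix.smul_apply, Matrix.map_apply, smul_eq_mul,
    Int.mul_ediv_cancel' (hdvd i j), Matrix.sub_apply, add_sub_cancel]

theorem mem_congruenceUnits_of_mem_spectrum {p : ℕ} (hp : p ≠ 0) {g : GL ι ℤ}
    (hg : g ∈ principalCongruenceSubgroup ι p) {u : ℂˣ}
    (hu : (u : ℂ) ∈ spectrum ℂ ((g : Matrix ι ι ℤ).map (Int.cast : ℤ → ℂ))) :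
    u ∈ congruenceUnits ℂ p := by
  let gℂ : GL ι ℂ := Units.map (Int.castRingHom ℂ).mapMatrix.toMonoidHom g
  have hinv : (↑u⁻¹ : ℂ) ∈ spectrum ℂ ((↑g⁻¹ : Matrix ι ι ℤ).map (Int.cast : ℤ → ℂ)) := by
    rw [Units.val_inv_eq_inv_val]
    exact spectrum.inv₀_mem_inv_iff (a := gℂ) |>.mpr hu
  obtain ⟨B, hB⟩ := exists_eq_one_add_smul_of_mem_principalCongruenceSubgroup hg
  have huB : (u : ℂ) ∈ spectrum ℂ (1 + (p : ℂ) • B.map (Int.cast : ℤ → ℂ)) := by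
    rwa [hB, Matrix.map_add _ Int.cast_add, Matrix.map_one _ Int.cast_zero Int.cast_one,
      Matrix.map_smul' _ _ _ Int.cast_mul, Int.cast_natCast] at hu
  obtain ⟨ν, hν, huν⟩ :=
    spectrum.exists_eq_one_add_mul_of_mem_one_add_smul (Nat.cast_ne_zero.mpr hp) huB
  exact ⟨Matrix.isIntegral_of_mem_spectrum_map_intCast hinv, ν,
    Matrix.isIntegral_of_mem_spectrum_map_intCast hν, huν⟩

end PrincipalCongruence

theorem eigenvalueSubgroup_le_congruenceUnits {n p : ℕ} (hp : p ≠ 0) {g : GL (Fin n) ℤ}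
    (hg : g ∈ principalCongruenceSubgroup (Fin n) p) :
    eigenvalueSubgroup n g ≤ congruenceUnits ℂ p :=
  (Subgroup.closure_le _).mpr fun _ hu => mem_congruenceUnits_of_mem_spectrum hp hg hu

/-- every subgroup Γ of `GL n ℤ` contains a finite-index subgroup that is
neat: for every element of the subgroup, the subgroup of `ℂˣ` generated by its
eigenvalues is torsion-free. -/
theorem stmt_2 (n : ℕ) (Γ : Subgroup (GL (Fin n) ℤ)) :
    ∃ H : Subgroup (GL (Fin n) ℤ), H ≤ Γ ∧ (H.subgroupOf Γ).FiniteIndex ∧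
      ∀ g ∈ H, Monoid.IsTorsionFree ↥(eigenvalueSubgroup n g) := by
  refine ⟨principalCongruenceSubgroup (Fin n) 3 ⊓ Γ, inf_le_right, ?_, fun g hg => ?_⟩
  · rw [Subgroup.inf_subgroupOf_right]
    infer_instance
  · exact Subgroup.isTorsionFree_of_le (eigenvalueSubgroup_le_congruenceUnits three_ne_zero hg.1)
      fun _ hu => congruenceUnits.eq_one_of_isOfFinOrder le_rfl hu
end

section
/- Let G be a group, and let 0 → K → P ⊕ T → C → 0 be a short exact sequence of G-modules where G acts trivially on K and on P, and the composite K → P ⊕ T → P is injective. Then taking G-invariants yields a short exact sequence 0 → K → P ⊕ T^G → C^G → 0. -/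
/-- let `G` be a group and `0 → K → P ⊕ T → C → 0` a short exact sequence
of `G`-modules where `G` acts trivially on `K` and on `P` and the composite
`K → P ⊕ T → P` is injective.  Then taking `G`-invariants yields a short exact sequence
`0 → K → P ⊕ T^G → C^G → 0`. -/
theorem stmt_5 {G K P T C : Type*} [Group G]
    [AddCommGroup K] [AddCommGroup P] [AddCommGroup T] [AddCommGroup C]
    [DistribMulAction G K] [DistribMulAction G P] [DistribMulAction G T]
    [DistribMulAction G C]
    (htrivK : ∀ (σ : G) (x : K), σ • x = x)
    (htrivP : ∀ (σ : G) (x : P), σ • x = x)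
    (f : K →+ P × T) (g : P × T →+ C)
    (hfequiv : ∀ (σ : G) (x : K), f (σ • x) = σ • f x)
    (hgequiv : ∀ (σ : G) (x : P × T), g (σ • x) = σ • g x)
    (hfinj : Function.Injective f)
    (hgsurj : Function.Surjective g)
    (hexact : f.range = g.ker)
    (hKP : Function.Injective (fun k => (f k).1)) :
    -- exactness of `0 → K → P ⊕ T^G → C^G → 0`:
    -- `f` lands in `P ⊕ T^G`,
    (∀ k : K, ∀ σ : G, σ • (f k).2 = (f k).2) ∧
    -- `g` maps `P ⊕ T^G` onto `C^G`,
    (∀ c : C, (∀ σ : G, σ • c = c) →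
      ∃ x : P × T, (∀ σ : G, σ • x.2 = x.2) ∧ g x = c) ∧
    -- and the kernel of `g` restricted to `P ⊕ T^G` is the image of `K`.
    (∀ x : P × T, (∀ σ : G, σ • x.2 = x.2) → g x = 0 → ∃ k : K, f k = x) := by
  refine ⟨?_, ?_, ?_⟩
  · intro k σ
    have h := hfequiv σ k
    rw [htrivK] at h
    calc σ • (f k).2 = (σ • f k).2 := rfl
      _ = (f k).2 := by rw [← h]
  · intro c hc
    obtain ⟨x, hx⟩ := hgsurj c
    refine ⟨x, ?_, hx⟩
    intro σ
    have hker : σ • x - x ∈ g.ker := by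
      rw [AddMonoidHom.mem_ker, map_sub, hgequiv, hx, hc, sub_self]
    rw [← hexact] at hker
    obtain ⟨k, hk⟩ := hker
    have h1 : (f k).1 = 0 := by
      have : (f k).1 = (σ • x - x).1 := by rw [hk]
      rw [this]
      show (σ • x).1 - x.1 = 0
      show σ • x.1 - x.1 = 0
      rw [htrivP, sub_self]
    have hk0 : k = 0 := hKP (by simpa using h1)
    rw [hk0, map_zero] at hk
    have hx2 : σ • x = x := by
      have := sub_eq_zero.mp hk.symm
      exact this
    exact congrArg Prod.snd hx2
  · intro x _ hx0
    have : x ∈ g.ker := hx0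
    rw [← hexact] at this
    exact this
end

section
/- Let G be a group and suppose given exact sequences of G-modules 0 → K → P ⊕ T → C → 0 and 0 → C → H → K → 0, where K is finite, G acts trivially on K and P, and the composite K → P ⊕ T → P is injective. Then |H^G| / |P| ≤ |K| · |C^G| / |P| = |T^G| (assuming P, T^G, C^G, H^G are all finite). In particular |H^G| ≤ |P| · |T^G|. -/
/-- given exact sequences of `G`-modules `0 → K → P ⊕ T → C → 0` and
`0 → C → H → K → 0` with `K` finite, `G` acting trivially on `K` and `P`, and the
composite `K → P ⊕ T → P` injective, we have
`|H^G| ≤ |K|·|C^G|` and `|K|·|C^G| = |P|·|T^G|`; in particular `|H^G| ≤ |P|·|T^G|`. -/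
theorem stmt_6 {G K P T C H : Type*} [Group G]
    [AddCommGroup K] [AddCommGroup P] [AddCommGroup T] [AddCommGroup C] [AddCommGroup H]
    [DistribMulAction G K] [DistribMulAction G P] [DistribMulAction G T]
    [DistribMulAction G C] [DistribMulAction G H]
    [Finite K] [Finite P]
    [Finite {x : T // ∀ σ : G, σ • x = x}] [Finite {x : C // ∀ σ : G, σ • x = x}]
    [Finite {x : H // ∀ σ : G, σ • x = x}]
    (htrivK : ∀ (σ : G) (x : K), σ • x = x)
    (htrivP : ∀ (σ : G) (x : P), σ • x = x)
    (f : K →+ P × T) (g : P × T →+ C)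
    (hfequiv : ∀ (σ : G) (x : K), f (σ • x) = σ • f x)
    (hgequiv : ∀ (σ : G) (x : P × T), g (σ • x) = σ • g x)
    (hfinj : Function.Injective f) (hgsurj : Function.Surjective g)
    (hexact : f.range = g.ker)
    (hKP : Function.Injective (fun k => (f k).1))
    (c : C →+ H) (h : H →+ K)
    (hcequiv : ∀ (σ : G) (x : C), c (σ • x) = σ • c x)
    (hhequiv : ∀ (σ : G) (x : H), h (σ • x) = σ • h x)
    (hcinj : Function.Injective c) (hhsurj : Function.Surjective h)
    (hexact2 : c.range = h.ker) :
    Nat.card {x : H // ∀ σ : G, σ • x = x} ≤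
        Nat.card K * Nat.card {x : C // ∀ σ : G, σ • x = x} ∧
    Nat.card K * Nat.card {x : C // ∀ σ : G, σ • x = x} =
        Nat.card P * Nat.card {x : T // ∀ σ : G, σ • x = x} ∧
    Nat.card {x : H // ∀ σ : G, σ • x = x} ≤
        Nat.card P * Nat.card {x : T // ∀ σ : G, σ • x = x} := by
  classical
  have hfixfst : ∀ (σ : G) (x : P × T), (σ • x).1 = x.1 := fun σ x => by
    rw [Prod.smul_fst]; exact htrivP σ x.1
  -- invariants of P × T are P × T^G
  let e : {x : P × T // ∀ σ : G, σ • x = x} ≃ P × {x : T // ∀ σ : G, σ • x = x} :=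
  { toFun := fun x => (x.1.1, ⟨x.1.2, fun σ => by
      conv_rhs => rw [← x.2 σ]
      rw [Prod.smul_snd]⟩)
    invFun := fun pt => ⟨(pt.1, pt.2.1), fun σ => by
      have h1 : (σ • ((pt.1, pt.2.1) : P × T)).1 = pt.1 := by
        rw [Prod.smul_fst]; exact htrivP σ pt.1
      have h2 : (σ • ((pt.1, pt.2.1) : P × T)).2 = pt.2.1 := by
        rw [Prod.smul_snd]; exact pt.2.2 σ
      exact Prod.ext h1 h2⟩
    left_inv := fun x => rfl
    right_inv := fun pt => rfl }
  have hPT : Nat.card {x : P × T // ∀ σ : G, σ • x = x} =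
      Nat.card P * Nat.card {x : T // ∀ σ : G, σ • x = x} := by
    rw [Nat.card_congr e, Nat.card_prod]
  have hgf : ∀ k : K, g (f k) = 0 := fun k => by
    have hm : f k ∈ g.ker := hexact ▸ ⟨k, rfl⟩
    exact AddMonoidHom.mem_ker.mp hm
  -- every element of C^G has an invariant preimage under g
  have hsurjCG : ∀ y : C, (∀ σ : G, σ • y = y) →
      ∃ x : P × T, (∀ σ : G, σ • x = x) ∧ g x = y := by
    intro y hy
    obtain ⟨x, hx⟩ := hgsurj y
    refine ⟨x, fun σ => ?_, hx⟩
    have h0 : g (σ • x - x) = 0 := by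
      rw [map_sub, hgequiv, hx, hy, sub_self]
    have h1 : σ • x - x ∈ f.range := by
      rw [hexact]; exact AddMonoidHom.mem_ker.mpr h0
    obtain ⟨k, hk⟩ := h1
    have hk0 : k = 0 := by
      apply hKP
      show (f k).1 = (f 0).1
      rw [hk, map_zero]
      show (σ • x - x).1 = (0 : P × T).1
      rw [Prod.fst_sub, hfixfst, sub_self]
      rfl
    have hx0 : σ • x - x = 0 := by rw [← hk, hk0, map_zero]
    exact sub_eq_zero.mp hx0
  let s : {y : C // ∀ σ : G, σ • y = y} → {x : P × T // ∀ σ : G, σ • x = x} :=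
    fun y => ⟨(hsurjCG y.1 y.2).choose, (hsurjCG y.1 y.2).choose_spec.1⟩
  have hs : ∀ y, g (s y).1 = y.1 := fun y => (hsurjCG y.1 y.2).choose_spec.2
  let φ : K × {y : C // ∀ σ : G, σ • y = y} → {x : P × T // ∀ σ : G, σ • x = x} :=
    fun ky => ⟨f ky.1 + (s ky.2).1, fun σ => by
      rw [smul_add, ← hfequiv, htrivK, (s ky.2).2 σ]⟩
  have hφ : Function.Bijective φ := by
    constructor
    · rintro ⟨k, y⟩ ⟨k', y'⟩ hkk
      have hval : f k + (s y).1 = f k' + (s y').1 := congrArg Subtype.val hkk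
      have hy : y = y' := by
        have h2 := congrArg g hval
        rw [map_add, map_add, hgf, hgf, zero_add, zero_add, hs, hs] at h2
        exact Subtype.ext h2
      subst hy
      have h3 : f k = f k' := add_right_cancel hval
      rw [hfinj h3]
    · rintro ⟨x, hx⟩
      have hy : ∀ σ : G, σ • g x = g x := fun σ => by rw [← hgequiv, hx]
      have hker : x - (s ⟨g x, hy⟩).1 ∈ g.ker := by
        refine AddMonoidHom.mem_ker.mpr ?_
        rw [map_sub, hs, sub_self]
      rw [← hexact] at hker
      obtain ⟨k, hk⟩ := hker
      refine ⟨(k, ⟨g x, hy⟩), ?_⟩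
      apply Subtype.ext
      show f k + (s ⟨g x, hy⟩).1 = x
      rw [hk]
      abel
  have hKC : Nat.card K * Nat.card {x : C // ∀ σ : G, σ • x = x} =
      Nat.card P * Nat.card {x : T // ∀ σ : G, σ • x = x} := by
    rw [← Nat.card_prod, Nat.card_eq_of_bijective φ hφ, hPT]
  -- partial section of h over the invariants
  let sK : K → {x : H // ∀ σ : G, σ • x = x} := fun k =>
    if hk : ∃ x : {x : H // ∀ σ : G, σ • x = x}, h x.1 = k then hk.choose
    else ⟨0, fun σ => smul_zero σ⟩
  have hsK : ∀ x : {x : H // ∀ σ : G, σ • x = x}, h (sK (h x.1)).1 = h x.1 := fun x => by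
    have hk : ∃ y : {x : H // ∀ σ : G, σ • x = x}, h y.1 = h x.1 := ⟨x, rfl⟩
    simp only [sK, dif_pos hk]
    exact hk.choose_spec
  have hzx : ∀ x : {x : H // ∀ σ : G, σ • x = x},
      ∃ z : C, c z = x.1 - (sK (h x.1)).1 ∧ ∀ σ : G, σ • z = z := by
    intro x
    have hker : x.1 - (sK (h x.1)).1 ∈ h.ker := by
      refine AddMonoidHom.mem_ker.mpr ?_
      rw [map_sub, hsK, sub_self]
    rw [← hexact2] at hker
    obtain ⟨z, hzc⟩ := hker
    refine ⟨z, hzc, fun σ => ?_⟩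
    apply hcinj
    rw [hcequiv, hzc, smul_sub, x.2 σ, (sK (h x.1)).2 σ]
  let ψ : {x : H // ∀ σ : G, σ • x = x} → K × {x : C // ∀ σ : G, σ • x = x} :=
    fun x => (h x.1, ⟨(hzx x).choose, (hzx x).choose_spec.2⟩)
  have hψ : Function.Injective ψ := by
    intro x x' hxx
    have h1 : h x.1 = h x'.1 := congrArg Prod.fst hxx
    have h2 : (hzx x).choose = (hzx x').choose :=
      congrArg (fun p => (Prod.snd p).1) hxx
    have h3 := (hzx x).choose_spec.1
    have h4 := (hzx x').choose_spec.1
    rw [h2, h1] at h3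
    have h5 := h4.symm.trans h3
    exact Subtype.ext (sub_left_inj.mp h5).symm
  have hle : Nat.card {x : H // ∀ σ : G, σ • x = x} ≤
      Nat.card K * Nat.card {x : C // ∀ σ : G, σ • x = x} := by
    have := Nat.card_le_card_of_injective ψ hψ
    rwa [Nat.card_prod] at this
  exact ⟨hle, hKC, hle.trans_eq hKC⟩
end
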